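/- Let n ≥ 1, k > 0, c > 0, ω_f > 0, α ∈ [0,1], let h₁ ∈ ℝⁿ be nonzero with ĥ₁ := h₁/‖h₁‖, let H be a symmetric positive definite real n×n matrix, set M := k(Iₙ − α ĥ₁ ĥ₁ᵀ), c̃ := c α/‖h₁‖², X = [[0, −M, −c̃ h₁], [ω_f H, −ω_f Iₙ, 0], [ω_f h₁ᵀ, 0, −ω_f]] and Z := ω_f M H + ω_f c̃ h₁ h₁ᵀ. Then the set of complex eigenvalues of X equals {−ω_f} ∪ {λ ∈ ℂ : λ² + ω_f λ + λ̄ = 0 for some complex eigenvalue λ̄ of Z}; in particular −ω_f is an eigenvalue of X, and for every eigenvalue λ̄ of Z both roots of λ² + ω_f λ + λ̄ = 0 are eigenvalues of X. -/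
import Mathlib


noncomputable section
open Matrix Polynomial

/-- `μ ∈ ℂ` is an eigenvalue of the real matrix `A`, i.e. a root of its
characteristic polynomial over `ℂ`. -/
def IsEig {m : Type} [Fintype m] [DecidableEq m] (A : Matrix m m ℝ) (μ : ℂ) : Prop :=
  ((A.charpoly).map (algebraMap ℝ ℂ)).IsRoot μ

/-- The normalized vector `ĥ₁ = h₁/‖h₁‖`. -/
def hhat (n : ℕ) (h₁ : Fin n → ℝ) : Fin n → ℝ := (Real.sqrt (h₁ ⬝ᵥ h₁))⁻¹ • h₁

/-- `M = k(I − α ĥ₁ĥ₁ᵀ)`. -/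
def Mmat (n : ℕ) (k α : ℝ) (h₁ : Fin n → ℝ) : Matrix (Fin n) (Fin n) ℝ :=
  k • ((1 : Matrix (Fin n) (Fin n) ℝ) - α • Matrix.vecMulVec (hhat n h₁) (hhat n h₁))

/-- The `(2n+1) × (2n+1)` block matrix
`X = [[0, −M, −c̃ h₁], [ω_f H, −ω_f Iₙ, 0], [ω_f h₁ᵀ, 0, −ω_f]]`. -/
def Xmat (n : ℕ) (ωf ctil : ℝ) (h₁ : Fin n → ℝ) (M H : Matrix (Fin n) (Fin n) ℝ) :
    Matrix ((Fin n ⊕ Fin n) ⊕ Unit) ((Fin n ⊕ Fin n) ⊕ Unit) ℝ :=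
  Matrix.fromBlocks
    (Matrix.fromBlocks 0 (-M) (ωf • H) (-(ωf • (1 : Matrix (Fin n) (Fin n) ℝ))))
    (Matrix.of fun i (_ : Unit) => Sum.elim (fun j => -(ctil * h₁ j)) (fun _ => (0 : ℝ)) i)
    (Matrix.of fun (_ : Unit) j => Sum.elim (fun j' => ωf * h₁ j') (fun _ => (0 : ℝ)) j)
    (Matrix.of fun _ _ => -ωf)

/-- `Z := ω_f M H + ω_f c̃ h₁ h₁ᵀ`. -/
def Zmat (n : ℕ) (ωf ctil : ℝ) (h₁ : Fin n → ℝ) (M H : Matrix (Fin n) (Fin n) ℝ) :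
    Matrix (Fin n) (Fin n) ℝ :=
  ωf • (M * H) + (ωf * ctil) • Matrix.vecMulVec h₁ h₁

/- ### Auxiliary lemmas -/

lemma eval_charpolyC {m : Type} [Fintype m] [DecidableEq m] (A : Matrix m m ℂ) (μ : ℂ) :
    A.charpoly.eval μ = (μ • (1 : Matrix m m ℂ) - A).det := by
  rw [Matrix.charpoly, show Polynomial.eval μ = ⇑(Polynomial.evalRingHom μ) from rfl,
    RingHom.map_det]
  congr 1
  ext i j
  by_cases h : i = j <;>
    simp [Matrix.charmatrix_apply, Matrix.one_apply, Matrix.diagonal_apply, h]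

lemma IsEig_iff_det {m : Type} [Fintype m] [DecidableEq m] (A : Matrix m m ℝ) (μ : ℂ) :
    IsEig A μ ↔ (μ • (1 : Matrix m m ℂ) - A.map (algebraMap ℝ ℂ)).det = 0 := by
  rw [IsEig, ← Matrix.charpoly_map, Polynomial.IsRoot, eval_charpolyC]

def invertibleSmulOne {m : Type} [Fintype m] [DecidableEq m] {β : ℂ} (hβ : β ≠ 0) :
    Invertible (β • (1 : Matrix m m ℂ)) :=
  ⟨β⁻¹ • (1 : Matrix m m ℂ), by
      simp [Matrix.smul_mul, Matrix.mul_smul, smul_smul, inv_mul_cancel₀ hβ, mul_inv_cancel₀ hβ], by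
      simp [Matrix.smul_mul, Matrix.mul_smul, smul_smul, inv_mul_cancel₀ hβ, mul_inv_cancel₀ hβ]⟩

lemma key_det (n : ℕ) (ωf ctil : ℂ) (h₁ : Fin n → ℂ) (M H : Matrix (Fin n) (Fin n) ℂ)
    (μ : ℂ) (hμ : μ + ωf ≠ 0) :
    (μ • (1 : Matrix ((Fin n ⊕ Fin n) ⊕ Unit) ((Fin n ⊕ Fin n) ⊕ Unit) ℂ) -
      Matrix.fromBlocks
        (Matrix.fromBlocks 0 (-M) (ωf • H) (-(ωf • (1 : Matrix (Fin n) (Fin n) ℂ))))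
        (Matrix.of fun i (_ : Unit) => Sum.elim (fun j => -(ctil * h₁ j)) (fun _ => (0 : ℂ)) i)
        (Matrix.of fun (_ : Unit) j => Sum.elim (fun j' => ωf * h₁ j') (fun _ => (0 : ℂ)) j)
        (Matrix.of fun _ _ => -ωf)).det
    = (μ + ωf) *
      ((μ ^ 2 + ωf * μ) • (1 : Matrix (Fin n) (Fin n) ℂ)
        + (ωf • (M * H) + (ωf * ctil) • Matrix.vecMulVec h₁ h₁)).det := by
  set β : ℂ := μ + ωf with hβ
  have h1 : μ • (1 : Matrix ((Fin n ⊕ Fin n) ⊕ Unit) ((Fin n ⊕ Fin n) ⊕ Unit) ℂ) -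
      Matrix.fromBlocks
        (Matrix.fromBlocks 0 (-M) (ωf • H) (-(ωf • (1 : Matrix (Fin n) (Fin n) ℂ))))
        (Matrix.of fun i (_ : Unit) => Sum.elim (fun j => -(ctil * h₁ j)) (fun _ => (0 : ℂ)) i)
        (Matrix.of fun (_ : Unit) j => Sum.elim (fun j' => ωf * h₁ j') (fun _ => (0 : ℂ)) j)
        (Matrix.of fun _ _ => -ωf) =
      Matrix.fromBlocks
        (Matrix.fromBlocks (μ • 1) M (-(ωf • H)) (β • 1))
        (Matrix.of fun i (_ : Unit) => Sum.elim (fun j => ctil * h₁ j) (fun _ => (0 : ℂ)) i)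
        (Matrix.of fun (_ : Unit) j => Sum.elim (fun j' => -(ωf * h₁ j')) (fun _ => (0 : ℂ)) j)
        (β • (1 : Matrix Unit Unit ℂ)) := by
    ext i j
    rcases i with (i | i) | _ <;> rcases j with (j | j) | _ <;>
      simp [Matrix.one_apply, Matrix.fromBlocks, hβ, Sum.elim] <;>
      split <;> ring
  rw [h1]
  letI := invertibleSmulOne (m := Unit) hμ
  letI := invertibleSmulOne (m := Fin n) hμ
  have hiU : ⅟(β • (1 : Matrix Unit Unit ℂ)) = β⁻¹ • (1 : Matrix Unit Unit ℂ) :=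
    invOf_eq_right_inv (by
      simp [Matrix.smul_mul, Matrix.mul_smul, smul_smul, inv_mul_cancel₀ hμ, mul_inv_cancel₀ hμ])
  have hiN : ⅟(β • (1 : Matrix (Fin n) (Fin n) ℂ)) = β⁻¹ • (1 : Matrix (Fin n) (Fin n) ℂ) :=
    invOf_eq_right_inv (by
      simp [Matrix.smul_mul, Matrix.mul_smul, smul_smul, inv_mul_cancel₀ hμ, mul_inv_cancel₀ hμ])
  rw [Matrix.det_fromBlocks₂₂, hiU]
  have h2 :
      ((Matrix.of fun i (_ : Unit) => Sum.elim (fun j => ctil * h₁ j) (fun _ => (0 : ℂ)) i :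
          Matrix (Fin n ⊕ Fin n) Unit ℂ)) *
        (β⁻¹ • (1 : Matrix Unit Unit ℂ)) *
        ((Matrix.of fun (_ : Unit) j => Sum.elim (fun j' => -(ωf * h₁ j')) (fun _ => (0 : ℂ)) j :
          Matrix Unit (Fin n ⊕ Fin n) ℂ)) =
      Matrix.fromBlocks ((-(β⁻¹ * ctil * ωf)) • Matrix.vecMulVec h₁ h₁) 0 0 0 := by
    rw [Matrix.mul_smul, Matrix.mul_one]
    ext i j
    rcases i with i | i <;> rcases j with j | j <;>
      simp [Matrix.mul_apply, Matrix.fromBlocks, Matrix.vecMulVec_apply, Sum.elim] <;> ring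
  rw [h2]
  have h3 : Matrix.fromBlocks (μ • (1 : Matrix (Fin n) (Fin n) ℂ)) M (-(ωf • H)) (β • 1) -
      Matrix.fromBlocks ((-(β⁻¹ * ctil * ωf)) • Matrix.vecMulVec h₁ h₁) 0 0 0 =
      Matrix.fromBlocks
        (μ • (1 : Matrix (Fin n) (Fin n) ℂ) + (β⁻¹ * ctil * ωf) • Matrix.vecMulVec h₁ h₁)
        M (-(ωf • H)) (β • 1) := by
    ext i j
    rcases i with i | i <;> rcases j with j | j <;> simp [Matrix.fromBlocks] <;> ring_nf <;> simp
  rw [h3, Matrix.det_fromBlocks₂₂, hiN]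
  have h4 : M * (β⁻¹ • (1 : Matrix (Fin n) (Fin n) ℂ)) * (-(ωf • H)) =
      -((β⁻¹ * ωf) • (M * H)) := by
    rw [Matrix.mul_smul, Matrix.mul_one, Matrix.mul_neg, Matrix.smul_mul, Matrix.mul_smul,
      smul_smul]
  rw [h4, sub_neg_eq_add]
  have h5 : (μ • (1 : Matrix (Fin n) (Fin n) ℂ) + (β⁻¹ * ctil * ωf) • Matrix.vecMulVec h₁ h₁)
        + (β⁻¹ * ωf) • (M * H) =
      β⁻¹ • ((μ ^ 2 + ωf * μ) • (1 : Matrix (Fin n) (Fin n) ℂ)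
        + (ωf • (M * H) + (ωf * ctil) • Matrix.vecMulVec h₁ h₁)) := by
    rw [smul_add, smul_add, smul_smul, smul_smul, smul_smul]
    have e1 : β⁻¹ * (μ ^ 2 + ωf * μ) = μ := by
      field_simp [hβ]; ring
    have e2 : β⁻¹ * (ωf * ctil) = β⁻¹ * ctil * ωf := by ring
    rw [e1, e2]
    abel
  rw [h5, Matrix.det_smul, Matrix.det_smul, Matrix.det_smul]
  simp only [Fintype.card_unit, Fintype.card_fin, pow_one, Matrix.det_one, mul_one]
  rw [← mul_assoc (β ^ n), ← mul_pow, mul_inv_cancel₀ hμ, one_pow, one_mul]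

lemma Xmat_map (n : ℕ) (ωf ctil : ℝ) (h₁ : Fin n → ℝ) (M H : Matrix (Fin n) (Fin n) ℝ) :
    (Xmat n ωf ctil h₁ M H).map (algebraMap ℝ ℂ) =
      Matrix.fromBlocks
        (Matrix.fromBlocks 0 (-(M.map (algebraMap ℝ ℂ))) ((ωf : ℂ) • H.map (algebraMap ℝ ℂ))
          (-((ωf : ℂ) • (1 : Matrix (Fin n) (Fin n) ℂ))))
        (Matrix.of fun i (_ : Unit) =>
          Sum.elim (fun j => -((ctil : ℂ) * (h₁ j : ℂ))) (fun _ => (0 : ℂ)) i)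
        (Matrix.of fun (_ : Unit) j =>
          Sum.elim (fun j' => (ωf : ℂ) * (h₁ j' : ℂ)) (fun _ => (0 : ℂ)) j)
        (Matrix.of fun _ _ => -(ωf : ℂ)) := by
  ext i j
  rcases i with (i | i) | _ <;> rcases j with (j | j) | _ <;>
    simp [Xmat, Matrix.fromBlocks, Matrix.map_apply, Matrix.one_apply, Sum.elim, apply_ite] <;>
    (try (split_ifs with hij <;> simp [hij]))

lemma Zmat_map (n : ℕ) (ωf ctil : ℝ) (h₁ : Fin n → ℝ) (M H : Matrix (Fin n) (Fin n) ℝ) :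
    (Zmat n ωf ctil h₁ M H).map (algebraMap ℝ ℂ) =
      (ωf : ℂ) • (M.map (algebraMap ℝ ℂ) * H.map (algebraMap ℝ ℂ)) +
        ((ωf : ℂ) * (ctil : ℂ)) •
          Matrix.vecMulVec (fun j => (h₁ j : ℂ)) (fun j => (h₁ j : ℂ)) := by
  ext i j
  simp [Zmat, Matrix.map_apply, Matrix.mul_apply, Matrix.vecMulVec_apply, Finset.mul_sum]

/-- The set of complex eigenvalues of `X` equals `{−ω_f}` together with all roots of
`λ² + ω_f λ + λ̄ = 0` as `λ̄` ranges over the eigenvalues of `Z`; in particular `−ω_f`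
is an eigenvalue of `X` and every root of `λ² + ω_f λ + λ̄ = 0` is an eigenvalue of `X`. -/
theorem stmt5 (n : ℕ) (hn : 1 ≤ n) (k c ωf α : ℝ)
    (hk : 0 < k) (hc : 0 < c) (hωf : 0 < ωf) (hα : α ∈ Set.Icc (0 : ℝ) 1)
    (h₁ : Fin n → ℝ) (hh₁ : h₁ ≠ 0)
    (H : Matrix (Fin n) (Fin n) ℝ) (hH : H.PosDef) :
    {μ : ℂ | IsEig (Xmat n ωf (c * α / (h₁ ⬝ᵥ h₁)) h₁ (Mmat n k α h₁) H) μ} =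
      {-(ωf : ℂ)} ∪ {lam : ℂ | ∃ lamBar : ℂ,
        IsEig (Zmat n ωf (c * α / (h₁ ⬝ᵥ h₁)) h₁ (Mmat n k α h₁) H) lamBar ∧
        lam ^ 2 + (ωf : ℂ) * lam + lamBar = 0} ∧
    IsEig (Xmat n ωf (c * α / (h₁ ⬝ᵥ h₁)) h₁ (Mmat n k α h₁) H) (-(ωf : ℂ)) ∧
    ∀ lamBar : ℂ, IsEig (Zmat n ωf (c * α / (h₁ ⬝ᵥ h₁)) h₁ (Mmat n k α h₁) H) lamBar →
      ∀ lam : ℂ, lam ^ 2 + (ωf : ℂ) * lam + lamBar = 0 →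
        IsEig (Xmat n ωf (c * α / (h₁ ⬝ᵥ h₁)) h₁ (Mmat n k α h₁) H) lam := by
  set ctil : ℝ := c * α / (h₁ ⬝ᵥ h₁)
  set M := Mmat n k α h₁
  set XR := Xmat n ωf ctil h₁ M H
  set ZR := Zmat n ωf ctil h₁ M H
  set Zc := ZR.map (algebraMap ℝ ℂ) with hZc
  -- the key pointwise determinant identity
  have hkey : ∀ μ : ℂ, μ + (ωf : ℂ) ≠ 0 →
      (μ • (1 : Matrix ((Fin n ⊕ Fin n) ⊕ Unit) ((Fin n ⊕ Fin n) ⊕ Unit) ℂ) -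
        XR.map (algebraMap ℝ ℂ)).det =
      (μ + ωf) * ((μ ^ 2 + (ωf : ℂ) * μ) • (1 : Matrix (Fin n) (Fin n) ℂ) + Zc).det := by
    intro μ hμ
    rw [Xmat_map, hZc, Zmat_map]
    exact key_det n ωf ctil (fun j => (h₁ j : ℂ)) (M.map (algebraMap ℝ ℂ))
      (H.map (algebraMap ℝ ℂ)) μ hμ
  -- relating the shifted determinant of Z to its charpoly
  have hZdet : ∀ z : ℂ, (z • (1 : Matrix (Fin n) (Fin n) ℂ) + Zc).det =
      (-1 : ℂ) ^ n * Zc.charpoly.eval (-z) := by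
    intro z
    rw [eval_charpolyC]
    have : (-z) • (1 : Matrix (Fin n) (Fin n) ℂ) - Zc =
        -(z • (1 : Matrix (Fin n) (Fin n) ℂ) + Zc) := by
      ext i j; simp; ring
    rw [this, Matrix.det_neg, Fintype.card_fin, ← mul_assoc, ← mul_pow]
    simp
  -- the polynomial factorization of the charpoly of X
  set p : Polynomial ℂ :=
    (Polynomial.X + Polynomial.C (ωf : ℂ)) *
      (Polynomial.C ((-1 : ℂ) ^ n) *
        (Zc.charpoly.comp (-(Polynomial.X ^ 2 + Polynomial.C (ωf : ℂ) * Polynomial.X)))) with hp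
  have hXc : (XR.map (algebraMap ℝ ℂ)).charpoly = p := by
    have hinf : ({-((ωf : ℂ))}ᶜ : Set ℂ).Infinite :=
      Set.Finite.infinite_compl (Set.finite_singleton _)
    refine Polynomial.eq_of_infinite_eval_eq _ _ (hinf.mono ?_)
    intro x hx
    simp only [Set.mem_compl_iff, Set.mem_singleton_iff] at hx
    have hx' : x + (ωf : ℂ) ≠ 0 := fun h => hx (eq_neg_of_add_eq_zero_left h)
    simp only [Set.mem_setOf_eq]
    rw [eval_charpolyC, hkey x hx', hZdet, hp]
    simp [Polynomial.eval_comp]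
  -- the master equivalence
  have heval : ∀ μ : ℂ, IsEig XR μ ↔
      (μ = -(ωf : ℂ) ∨ IsEig ZR (-(μ ^ 2 + (ωf : ℂ) * μ))) := by
    intro μ
    rw [IsEig, ← Matrix.charpoly_map, Polynomial.IsRoot, hXc, hp]
    rw [IsEig, ← Matrix.charpoly_map (ZR) (algebraMap ℝ ℂ), Polynomial.IsRoot, ← hZc]
    simp only [Polynomial.eval_mul, Polynomial.eval_add, Polynomial.eval_X, Polynomial.eval_C,
      Polynomial.eval_comp, Polynomial.eval_neg, Polynomial.eval_pow]
    have hne : ((-1 : ℂ) ^ n) ≠ 0 := pow_ne_zero _ (by norm_num)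
    constructor
    · intro h
      rcases mul_eq_zero.mp h with h | h
      · exact Or.inl (eq_neg_of_add_eq_zero_left h)
      · rcases mul_eq_zero.mp h with h | h
        · exact absurd h hne
        · exact Or.inr h
    · rintro (h | h)
      · exact mul_eq_zero.mpr (Or.inl (by rw [h]; ring))
      · exact mul_eq_zero.mpr (Or.inr (mul_eq_zero.mpr (Or.inr h)))
  refine ⟨?_, ?_, ?_⟩
  · ext μ
    simp only [Set.mem_setOf_eq, Set.mem_union, Set.mem_singleton_iff, heval μ]
    constructor
    · rintro (h | h)
      · exact Or.inl h
      · exact Or.inr ⟨-(μ ^ 2 + (ωf : ℂ) * μ), h, by ring⟩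
    · rintro (h | ⟨lamBar, hlb, heq⟩)
      · exact Or.inl h
      · refine Or.inr ?_
        have : lamBar = -(μ ^ 2 + (ωf : ℂ) * μ) := by linear_combination heq
        rwa [this] at hlb
  · exact (heval _).2 (Or.inl rfl)
  · intro lamBar hlb lam heq
    refine (heval lam).2 (Or.inr ?_)
    have : lamBar = -(lam ^ 2 + (ωf : ℂ) * lam) := by linear_combination heq
    rwa [this] at hlb
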